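/- arXiv:1006.2730 — 4 statements merged into one kernel-verified Lean document; each statement's English description precedes it below -/
import Mathlib

section
/- Let L > 0, let ρ : ℝ → ℝ be continuous with ρ(x) > 0 on [−L,L], and let ξ be continuous on [−L,L]. Define κ = (1/(2L)) ∫_{−L}^{L} ∫_{−L}^{y} √(ρ(z)) ξ(z) dz dy and ξ₁(x) = √(ρ(x)) ∫_{−L}^{x} [κ − ∫_{−L}^{y} √(ρ(z)) ξ(z) dz] dy. Then ξ₁(−L) = 0, ξ₁(L) = 0, and the function ψ₁ := ξ₁/√ρ is twice continuously differentiable on [−L,L] with ψ₁''(x) = −√(ρ(x)) ξ(x) for all x ∈ [−L,L]. -/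
open Real Set intervalIntegral

/-- The iteration map of the paper: it sends a continuous function `ξ` on `[-L, L]`
to `x ↦ √(ρ x) · ∫_{-L}^{x} (κ - ∫_{-L}^{y} √(ρ z) ξ z dz) dy`, where the constant
`κ = (1/(2L)) ∫_{-L}^{L} ∫_{-L}^{y} √(ρ z) ξ z dz dy`. -/
noncomputable def stringIter (L : ℝ) (ρ ξ : ℝ → ℝ) : ℝ → ℝ := fun x =>
  Real.sqrt (ρ x) *
    ∫ y in (-L)..x,
      ((1 / (2 * L)) * ∫ u in (-L)..L, ∫ z in (-L)..u, Real.sqrt (ρ z) * ξ z) -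
        ∫ z in (-L)..y, Real.sqrt (ρ z) * ξ z

/-
After division by `√ρ`, `ψ₁ = ξ₁ / √ρ` is the double primitive
`x ↦ ∫_{-L}^{x} (κ - ∫_{-L}^{y} f)` of `f = √ρ · ξ`. By the fundamental theorem of calculus,
applied twice, its second derivative is `-f`; it vanishes at `-L` trivially, and at `L` because
`2Lκ` is exactly `∫_{-L}^{L} ∫_{-L}^{y} f`. Since `ξ` is only continuous on `[-L, L]`, the
calculus is done for a continuous extension of `f` to `ℝ`, which changes nothing on `[-L, L]`.
-/

section IteratedDeriv

variable {𝕜 E : Type*} [NontriviallyNormedField 𝕜] [NormedAddCommGroup E] [NormedSpace 𝕜 E]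
  {F F' F'' : 𝕜 → E}

theorem contDiff_two_of_hasDerivAt (hF : ∀ x, HasDerivAt F (F' x) x)
    (hF' : ∀ x, HasDerivAt F' (F'' x) x) (hF'' : Continuous F'') : ContDiff 𝕜 2 F := by
  have hderivF : deriv F = F' := funext fun x => (hF x).deriv
  have hderivF' : deriv F' = F'' := funext fun x => (hF' x).deriv
  rw [show (2 : WithTop ℕ∞) = 1 + 1 by norm_num]
  refine contDiff_succ_iff_deriv.2 ⟨fun x => (hF x).differentiableAt, by simp, ?_⟩
  rw [hderivF]
  exact contDiff_one_iff_deriv.2 ⟨fun x => (hF' x).differentiableAt, hderivF' ▸ hF''⟩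

theorem iteratedDerivWithin_two_eq_of_hasDerivWithinAt {s : Set 𝕜} {x : 𝕜}
    (hF : ∀ y ∈ s, HasDerivWithinAt F (F' y) s y) (hF' : HasDerivWithinAt F' (F'' x) s x)
    (hs : UniqueDiffOn 𝕜 s) (hx : x ∈ s) : iteratedDerivWithin 2 F s x = F'' x := by
  have hfirst : EqOn (iteratedDerivWithin 1 F s) F' s := fun y hy => by
    rw [iteratedDerivWithin_one]
    exact (hF y hy).derivWithin (hs y hy)
  calc iteratedDerivWithin 2 F s x = derivWithin (iteratedDerivWithin 1 F s) s x := by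
        rw [iteratedDerivWithin_succ]
    _ = derivWithin F' s x := derivWithin_congr hfirst (hfirst hx)
    _ = F'' x := hF'.derivWithin (hs x hx)

end IteratedDeriv

theorem ContinuousOn.exists_continuous_eqOn_Icc {α β : Type*}
    [ConditionallyCompleteLinearOrder α] [TopologicalSpace α] [OrderTopology α]
    [TopologicalSpace β] {a b : α} (hab : a ≤ b) {f : α → β} (hf : ContinuousOn f (Icc a b)) :
    ∃ g : α → β, Continuous g ∧ EqOn f g (Icc a b) :=
  ⟨IccExtend hab ((Icc a b).domRestrict f),
    (continuousOn_iff_continuous_domRestrict.1 hf).Icc_extend',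
    fun x hx => by rw [IccExtend_of_mem hab _ hx]; rfl⟩

theorem intervalIntegral.integral_congr_of_mem_Icc {E : Type*} [NormedAddCommGroup E]
    [NormedSpace ℝ E] {f g : ℝ → E} {a b y : ℝ}
    (hfg : EqOn f g (Icc a b)) (hy : y ∈ Icc a b) : ∫ z in a..y, f z = ∫ z in a..y, g z :=
  integral_congr (hfg.mono (by rw [uIcc_of_le hy.1]; exact Icc_subset_Icc_right hy.2))

namespace StringIter

variable {L : ℝ} {f g : ℝ → ℝ}

/-- The constant `κ` of the iteration map, for the integrand `f = √ρ · ξ`. -/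
noncomputable def kappa (L : ℝ) (f : ℝ → ℝ) : ℝ :=
  (1 / (2 * L)) * ∫ u in (-L)..L, ∫ z in (-L)..u, f z

/-- The function `ψ₁ = ξ₁ / √ρ`, for the integrand `f = √ρ · ξ`. -/
noncomputable def potential (L : ℝ) (f : ℝ → ℝ) (x : ℝ) : ℝ :=
  ∫ y in (-L)..x, (kappa L f - ∫ z in (-L)..y, f z)

theorem stringIter_eq_sqrt_mul_potential (ρ ξ : ℝ → ℝ) (x : ℝ) :
    stringIter L ρ ξ x = √(ρ x) * potential L (fun z => √(ρ z) * ξ z) x :=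
  rfl

theorem potential_congr (hfg : EqOn f g (Icc (-L) L)) :
    EqOn (potential L f) (potential L g) (Icc (-L) L) := fun x hx => by
  have hinner :
      EqOn (fun y => ∫ z in (-L)..y, f z) (fun y => ∫ z in (-L)..y, g z) (Icc (-L) L) :=
    fun y hy => integral_congr_of_mem_Icc hfg hy
  have hkappa : kappa L f = kappa L g := by
    rw [kappa, kappa, integral_congr_of_mem_Icc hinner ⟨hx.1.trans hx.2, le_rfl⟩]
  simp only [potential, hkappa]
  exact integral_congr_of_mem_Icc (fun y hy => congrArg (kappa L g - ·) (hinner hy)) hx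

theorem potential_neg_self : potential L f (-L) = 0 :=
  integral_same

theorem potential_self (hL : L ≠ 0) (hf : IntervalIntegrable f MeasureTheory.volume (-L) L) :
    potential L f L = 0 := by
  have hprimitive :
      IntervalIntegrable (fun y => ∫ z in (-L)..y, f z) MeasureTheory.volume (-L) L :=
    (continuousOn_primitive_interval' hf left_mem_uIcc).intervalIntegrable
  rw [potential, integral_sub intervalIntegrable_const hprimitive, integral_const, kappa,
    smul_eq_mul, show L - -L = 2 * L by ring]
  field_simp
  ring

theorem hasDerivAt_primitive_const_sub (hf : Continuous f) (c x : ℝ) :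
    HasDerivAt (fun x => c - ∫ z in (-L)..x, f z) (-f x) x :=
  (hf.integral_hasStrictDerivAt (-L) x).hasDerivAt.const_sub c

theorem hasDerivAt_potential (hf : Continuous f) (x : ℝ) :
    HasDerivAt (potential L f) (kappa L f - ∫ z in (-L)..x, f z) x := by
  have hcont : Continuous fun y => kappa L f - ∫ z in (-L)..y, f z :=
    continuous_const.sub (continuous_primitive (fun _ _ => hf.intervalIntegrable _ _) (-L))
  exact (hcont.integral_hasStrictDerivAt (-L) x).hasDerivAt

theorem contDiff_potential (hf : Continuous f) : ContDiff ℝ 2 (potential L f) :=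
  contDiff_two_of_hasDerivAt (hasDerivAt_potential hf) (hasDerivAt_primitive_const_sub hf _)
    hf.neg

theorem iteratedDerivWithin_two_potential (hf : Continuous f) {s : Set ℝ} {x : ℝ}
    (hs : UniqueDiffOn ℝ s) (hx : x ∈ s) : iteratedDerivWithin 2 (potential L f) s x = -f x :=
  iteratedDerivWithin_two_eq_of_hasDerivWithinAt (F'' := fun x => -f x)
    (fun y _ => (hasDerivAt_potential hf y).hasDerivWithinAt)
    (hasDerivAt_primitive_const_sub hf _ x).hasDerivWithinAt hs hx

end StringIter

open StringIter in
/-- The result `ξ₁` of one application of the iteration map vanishes at both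
endpoints of the string, and `ψ₁ = ξ₁/√ρ` is `C²` on `[-L, L]` with
`ψ₁'' = -√ρ · ξ`: the iteration map inverts the operator `(1/√ρ)(-d²/dx²)(1/√ρ)`. -/
theorem stringIter_dirichlet_and_inverts
    (L : ℝ) (hL : 0 < L) (ρ ξ : ℝ → ℝ)
    (hρ : Continuous ρ) (hρpos : ∀ x ∈ Set.Icc (-L) L, 0 < ρ x)
    (hξ : ContinuousOn ξ (Set.Icc (-L) L)) :
    stringIter L ρ ξ (-L) = 0 ∧ stringIter L ρ ξ L = 0 ∧
    ContDiffOn ℝ 2 (fun x => stringIter L ρ ξ x / Real.sqrt (ρ x)) (Set.Icc (-L) L) ∧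
    ∀ x ∈ Set.Icc (-L) L,
      iteratedDerivWithin 2 (fun x => stringIter L ρ ξ x / Real.sqrt (ρ x))
          (Set.Icc (-L) L) x
        = -(Real.sqrt (ρ x) * ξ x) := by
  have hLL : -L < L := by linarith
  have hf : ContinuousOn (fun z => √(ρ z) * ξ z) (Icc (-L) L) := hρ.sqrt.continuousOn.mul hξ
  obtain ⟨g, hg, hfg⟩ := hf.exists_continuous_eqOn_Icc hLL.le
  have hψ : EqOn (fun x => stringIter L ρ ξ x / √(ρ x)) (potential L g) (Icc (-L) L) :=
    fun x hx => by
      dsimp only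
      rw [stringIter_eq_sqrt_mul_potential, mul_div_cancel_left₀ _ (sqrt_pos.2 (hρpos x hx)).ne',
        potential_congr hfg hx]
  refine ⟨by rw [stringIter_eq_sqrt_mul_potential, potential_neg_self, mul_zero],
    by rw [stringIter_eq_sqrt_mul_potential,
      potential_self hL.ne' (hf.intervalIntegrable_of_Icc hLL.le), mul_zero],
    (contDiff_potential hg).contDiffOn.congr hψ, fun x hx => ?_⟩
  rw [iteratedDerivWithin_congr hψ hx,
    iteratedDerivWithin_two_potential hg (uniqueDiffOn_Icc hLL) hx, ← hfg hx]
end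

section
/- Let N be a positive even integer, L > 0, and for k ∈ {−N/2+1, …, N/2−1} define the little sinc functions s_k(N,L,x) = (2L/N) Σ_{n=1}^{N} ψ_n(x) ψ_n(x_k), where ψ_n(x) = L^{−1/2} sin(nπ(x+L)/(2L)) and x_k = 2Lk/N. Then for all k, j ∈ {−N/2+1, …, N/2−1}, ∫_{−L}^{L} s_k(N,L,x) s_j(N,L,x) dx = (2L/N) δ_{kj}. -/
/-!
Write `ψ_n` for `stringMode L n` and `x_k` for `gridPoint N L k`. Since
`s_k = Σ_n (2L/N) ψ_n(x_k) ψ_n` and the `ψ_n` are orthonormal on `[-L, L]`, the integral equals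
`(2L/N)² Σ_{n=1}^{N} ψ_n(x_k) ψ_n(x_j)`. With `N = 2M` one has `ψ_n(x_k) = L^{-1/2} sin (nπK/N)`
for `K = k + M ∈ {1, …, N-1}`, and the discrete orthogonality
`Σ_{n=1}^{N} sin (nπK/N) sin (nπJ/N) = (N/2) δ_{KJ}` follows from the product-to-sum formula and
the telescoping identity `2 sin (θ/2) Σ_{n=1}^{N} cos (nθ) = sin ((N + 1/2)θ) - sin (θ/2)`
at angles with `Nθ ∈ πℤ`.
-/

open Real Finset intervalIntegral
open MeasureTheory (Measure volume)

theorem two_mul_sin_half_mul_sum_cos (θ : ℝ) (N : ℕ) :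
    2 * sin (θ / 2) * ∑ n ∈ Icc 1 N, cos (n * θ) = sin ((N + 1 / 2) * θ) - sin (θ / 2) := by
  induction N with
  | zero => simp [div_eq_inv_mul]
  | succ N ih =>
    have step : sin ((N + 1 + 1 / 2) * θ) - sin ((N + 1 / 2) * θ)
        = 2 * sin (θ / 2) * cos ((N + 1) * θ) := by
      rw [sin_sub_sin]
      ring_nf
    rw [sum_Icc_succ_top (by omega), mul_add, ih]
    push_cast
    linarith

theorem sum_cos_of_nat_mul_eq_int_mul_pi {θ : ℝ} (N : ℕ) (m : ℤ) (hθ : sin (θ / 2) ≠ 0)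
    (hNθ : N * θ = m * π) : ∑ n ∈ Icc 1 N, cos (n * θ) = ((-1) ^ m - 1) / 2 := by
  have h := two_mul_sin_half_mul_sum_cos θ N
  rw [show ((N : ℝ) + 1 / 2) * θ = θ / 2 + m * π by linear_combination hNθ,
    sin_add_int_mul_pi] at h
  field_simp
  apply mul_left_cancel₀ hθ
  linear_combination h

theorem sum_cos_nat_mul_pi_mul_int_div {N : ℕ} {m : ℤ} (hm : m ≠ 0) (hmN : |m| < 2 * N) :
    ∑ n ∈ Icc 1 N, cos (n * (π * m / N)) = ((-1) ^ m - 1) / 2 := by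
  have hN : (N : ℝ) ≠ 0 := by
    have : (0 : ℤ) < N := by have := abs_pos.mpr hm; omega
    exact_mod_cast this.ne'
  apply sum_cos_of_nat_mul_eq_int_mul_pi N m
  · have hmR : |(m : ℝ)| < 2 * N := by exact_mod_cast hmN
    have hN' : (0 : ℝ) < N := by positivity
    rw [Ne, sin_eq_zero_iff_of_lt_of_lt]
    · simp [hm, hN, pi_ne_zero]
    · rw [abs_lt] at hmR
      rw [lt_div_iff₀ two_pos, lt_div_iff₀ hN']
      nlinarith [pi_pos]
    · rw [abs_lt] at hmR
      rw [div_lt_iff₀ two_pos, div_lt_iff₀ hN']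
      nlinarith [pi_pos]
  · field_simp

theorem sum_sin_mul_sin_pi_mul_int_div {N : ℕ} {K J : ℤ} (hK₀ : 0 < K) (hKN : K < N)
    (hJ₀ : 0 < J) (hJN : J < N) :
    ∑ n ∈ Icc 1 N, sin (n * (π * K / N)) * sin (n * (π * J / N))
      = if K = J then (N : ℝ) / 2 else 0 := by
  have hsum_add := sum_cos_nat_mul_pi_mul_int_div (N := N) (m := K + J) (by omega)
    (by rw [abs_of_pos (by omega)]; omega)
  have hprod : ∀ n : ℕ, sin (n * (π * K / N)) * sin (n * (π * J / N))
      = (cos (n * (π * ↑(K - J) / N)) - cos (n * (π * ↑(K + J) / N))) / 2 := by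
    intro n
    rw [eq_div_iff two_ne_zero, mul_comm, ← mul_assoc, two_mul_sin_mul_sin]
    push_cast
    ring_nf
  simp only [hprod, ← sum_div, sum_sub_distrib, hsum_add]
  split_ifs with hKJ
  · subst hKJ
    rw [show K + K = 2 * K by ring, zpow_mul]
    simp
  · have hparity : (-1 : ℝ) ^ (K + J) = (-1) ^ (K - J) := by
      rw [show K + J = K - J + 2 * J by ring, zpow_add₀ (by norm_num), zpow_mul]
      norm_num
    rw [sum_cos_nat_mul_pi_mul_int_div (by omega) (by rw [abs_lt]; omega), hparity]
    ring

theorem integral_cos_int_mul_pi_div {T : ℝ} (hT : T ≠ 0) {p : ℤ} (hp : p ≠ 0) :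
    ∫ u in (0 : ℝ)..T, cos (p * π * u / T) = 0 := by
  have hc : (p : ℝ) * π / T ≠ 0 := by simp [hp, hT, pi_ne_zero]
  simp_rw [show ∀ u : ℝ, (p : ℝ) * π * u / T = p * π / T * u by intro u; ring]
  rw [integral_comp_mul_left _ hc, integral_cos, div_mul_cancel₀ _ hT, sin_int_mul_pi]
  simp

theorem integral_sin_mul_sin_nat_mul_pi_div {T : ℝ} (hT : T ≠ 0) {n : ℕ} (hn : n ≠ 0) (m : ℕ) :
    ∫ u in (0 : ℝ)..T, sin (n * π * u / T) * sin (m * π * u / T) = if n = m then T / 2 else 0 := by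
  have hprod : ∀ u : ℝ, sin (n * π * u / T) * sin (m * π * u / T)
      = (cos (↑((n : ℤ) - m) * π * u / T) - cos (↑((n : ℤ) + m) * π * u / T)) / 2 := by
    intro u
    rw [eq_div_iff two_ne_zero, mul_comm, ← mul_assoc, two_mul_sin_mul_sin]
    push_cast
    ring_nf
  have hcos : ∀ p : ℤ, IntervalIntegrable (fun u => cos (p * π * u / T)) volume 0 T :=
    fun p => (continuous_cos.comp (by fun_prop)).intervalIntegrable _ _
  simp_rw [hprod]
  rw [integral_div, integral_sub (hcos _) (hcos _),
    integral_cos_int_mul_pi_div hT (p := n + m) (by omega)]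
  split_ifs with hnm
  · simp [hnm]
  · rw [integral_cos_int_mul_pi_div hT (by omega)]
    simp

theorem integral_sum_mul_sum_of_orthonormal {ι : Type*} [DecidableEq ι]
    {μ : Measure ℝ} {a b : ℝ} {s : Finset ι} {ψ : ι → ℝ → ℝ}
    (hint : ∀ i ∈ s, ∀ j ∈ s, IntervalIntegrable (fun x => ψ i x * ψ j x) μ a b)
    (horth : ∀ i ∈ s, ∀ j ∈ s, ∫ x in a..b, ψ i x * ψ j x ∂μ = if i = j then 1 else 0)
    (c d : ι → ℝ) :
    ∫ x in a..b, (∑ i ∈ s, c i * ψ i x) * (∑ j ∈ s, d j * ψ j x) ∂μ = ∑ i ∈ s, c i * d i := by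
  have hexpand : ∀ x, (∑ i ∈ s, c i * ψ i x) * (∑ j ∈ s, d j * ψ j x)
      = ∑ i ∈ s, ∑ j ∈ s, c i * d j * (ψ i x * ψ j x) := fun x => by
    rw [sum_mul_sum]
    exact sum_congr rfl fun i _ => sum_congr rfl fun j _ => by ring
  have hterm : ∀ i ∈ s, ∀ j ∈ s,
      ∫ x in a..b, c i * d j * (ψ i x * ψ j x) ∂μ = if i = j then c i * d j else 0 := by
    intro i hi j hj
    rw [integral_const_mul, horth i hi j hj, mul_ite, mul_one, mul_zero]
  simp_rw [hexpand]
  rw [integral_finsetSum fun i hi => by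
    rw [← sum_fn]; exact IntervalIntegrable.sum s fun j hj => (hint i hi j hj).const_mul _]
  refine sum_congr rfl fun i hi => ?_
  rw [integral_finsetSum fun j hj => (hint i hi j hj).const_mul _, sum_congr rfl (hterm i hi),
    sum_ite_eq, if_pos hi]

noncomputable def stringMode (L : ℝ) (n : ℕ) (x : ℝ) : ℝ :=
  (√L)⁻¹ * sin (n * π * (x + L) / (2 * L))

theorem continuous_stringMode (L : ℝ) (n : ℕ) : Continuous (stringMode L n) := by
  unfold stringMode
  fun_prop

theorem integral_stringMode_mul_stringMode {L : ℝ} (hL : 0 < L) {n : ℕ} (hn : n ≠ 0) (m : ℕ) :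
    ∫ x in (-L)..L, stringMode L n x * stringMode L m x = if n = m then 1 else 0 := by
  have hsq : (√L)⁻¹ * (√L)⁻¹ = L⁻¹ := by
    rw [← mul_inv, Real.mul_self_sqrt hL.le]
  have hprod : ∀ x, stringMode L n x * stringMode L m x
      = L⁻¹ * (sin (n * π * (x + L) / (2 * L)) * sin (m * π * (x + L) / (2 * L))) := fun x => by
    rw [stringMode, stringMode, mul_mul_mul_comm, hsq]
  simp_rw [hprod]
  rw [integral_const_mul,
    integral_comp_add_right (fun u => sin (n * π * u / (2 * L)) * sin (m * π * u / (2 * L))),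
    neg_add_cancel, ← two_mul, integral_sin_mul_sin_nat_mul_pi_div (by positivity) hn]
  split_ifs
  · field_simp
  · rw [mul_zero]

noncomputable def gridPoint (N : ℕ) (L : ℝ) (k : ℤ) : ℝ := 2 * L * k / N

theorem stringMode_gridPoint {L : ℝ} (hL : L ≠ 0) {N M : ℕ} (hM : N = M + M) (hN : N ≠ 0)
    (n : ℕ) (k : ℤ) :
    stringMode L n (gridPoint N L k) = (√L)⁻¹ * sin (n * (π * ↑(k + M) / N)) := by
  rw [stringMode, gridPoint]
  congr 2
  subst hM
  have hM₀ : (M : ℝ) ≠ 0 := by norm_cast; omega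
  push_cast
  field_simp
  ring

noncomputable def littleSinc (N : ℕ) (L : ℝ) (k : ℤ) (x : ℝ) : ℝ :=
  2 * L / N * ∑ n ∈ Icc 1 N, stringMode L n x * stringMode L n (gridPoint N L k)

theorem integral_littleSinc_mul_littleSinc {L : ℝ} (hL : 0 < L) (N : ℕ) (k j : ℤ) :
    ∫ x in (-L)..L, littleSinc N L k x * littleSinc N L j x
      = (2 * L / N) ^ 2 *
          ∑ n ∈ Icc 1 N, stringMode L n (gridPoint N L k) * stringMode L n (gridPoint N L j) := by
  have hexpand : ∀ k x, littleSinc N L k x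
      = ∑ n ∈ Icc 1 N, 2 * L / N * stringMode L n (gridPoint N L k) * stringMode L n x :=
    fun k x => by
      rw [littleSinc, mul_sum]
      exact sum_congr rfl fun n _ => by ring
  simp_rw [hexpand]
  rw [integral_sum_mul_sum_of_orthonormal
    (fun n _ m _ =>
      ((continuous_stringMode L n).mul (continuous_stringMode L m)).intervalIntegrable _ _)
    (fun n hn m _ => integral_stringMode_mul_stringMode hL (by grind) m), mul_sum]
  exact sum_congr rfl fun n _ => by ring

theorem sum_stringMode_gridPoint_mul {L : ℝ} (hL : 0 < L) {N M : ℕ} (hM : N = M + M) {k j : ℤ}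
    (hk₀ : 0 < k + M) (hkN : k + M < N) (hj₀ : 0 < j + M) (hjN : j + M < N) :
    ∑ n ∈ Icc 1 N, stringMode L n (gridPoint N L k) * stringMode L n (gridPoint N L j)
      = if k = j then N / (2 * L) else 0 := by
  have hN : N ≠ 0 := by omega
  have hsq : (√L)⁻¹ * (√L)⁻¹ = L⁻¹ := by
    rw [← mul_inv, Real.mul_self_sqrt hL.le]
  simp_rw [stringMode_gridPoint hL.ne' hM hN, mul_mul_mul_comm _ (sin _), hsq, ← mul_sum]
  rw [sum_sin_mul_sin_pi_mul_int_div hk₀ hkN hj₀ hjN]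
  simp only [add_left_inj]
  split_ifs
  · field_simp
  · rw [mul_zero]

theorem little_sinc_continuum_orthogonality_general
    (N : ℕ) (hNeven : Even N) (L : ℝ) (hL : 0 < L) (k j : ℤ)
    (hk₁ : -(N : ℤ) < 2 * k) (hk₂ : 2 * k < (N : ℤ))
    (hj₁ : -(N : ℤ) < 2 * j) (hj₂ : 2 * j < (N : ℤ)) :
    (∫ x in (-L)..L,
        ((2 * L / (N : ℝ)) * ∑ n ∈ Finset.Icc 1 N,
            ((Real.sqrt L)⁻¹ * Real.sin ((n : ℝ) * π * (x + L) / (2 * L))) *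
              ((Real.sqrt L)⁻¹ *
                Real.sin ((n : ℝ) * π * ((2 * L * (k : ℝ) / (N : ℝ)) + L) / (2 * L)))) *
          ((2 * L / (N : ℝ)) * ∑ n ∈ Finset.Icc 1 N,
            ((Real.sqrt L)⁻¹ * Real.sin ((n : ℝ) * π * (x + L) / (2 * L))) *
              ((Real.sqrt L)⁻¹ *
                Real.sin ((n : ℝ) * π * ((2 * L * (j : ℝ) / (N : ℝ)) + L) / (2 * L)))))
      = if k = j then 2 * L / (N : ℝ) else 0 := by
  obtain ⟨M, hM⟩ := hNeven
  change ∫ x in (-L)..L, littleSinc N L k x * littleSinc N L j x = _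
  rw [integral_littleSinc_mul_littleSinc hL,
    sum_stringMode_gridPoint_mul hL hM (by omega) (by omega) (by omega) (by omega)]
  have hN : (N : ℝ) ≠ 0 := by norm_cast; omega
  split_ifs
  · field_simp
  · rw [mul_zero]

/-- Continuum orthogonality of the little sinc functions
`s_k(N,L,x) = (2L/N) Σ_{n=1}^{N} ψ_n(x) ψ_n(x_k)`, where
`ψ_n(x) = L^{-1/2} sin(nπ(x+L)/(2L))` and `x_k = 2Lk/N`:
`∫_{-L}^{L} s_k s_j dx = (2L/N) δ_{kj}`. -/
theorem little_sinc_continuum_orthogonality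
    (N : ℕ) (hN : 0 < N) (hNeven : Even N) (L : ℝ) (hL : 0 < L) (k j : ℤ)
    (hk₁ : -(N : ℤ) < 2 * k) (hk₂ : 2 * k < (N : ℤ))
    (hj₁ : -(N : ℤ) < 2 * j) (hj₂ : 2 * j < (N : ℤ)) :
    (∫ x in (-L)..L,
        ((2 * L / (N : ℝ)) * ∑ n ∈ Finset.Icc 1 N,
            ((Real.sqrt L)⁻¹ * Real.sin ((n : ℝ) * π * (x + L) / (2 * L))) *
              ((Real.sqrt L)⁻¹ *
                Real.sin ((n : ℝ) * π * ((2 * L * (k : ℝ) / (N : ℝ)) + L) / (2 * L)))) *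
          ((2 * L / (N : ℝ)) * ∑ n ∈ Finset.Icc 1 N,
            ((Real.sqrt L)⁻¹ * Real.sin ((n : ℝ) * π * (x + L) / (2 * L))) *
              ((Real.sqrt L)⁻¹ *
                Real.sin ((n : ℝ) * π * ((2 * L * (j : ℝ) / (N : ℝ)) + L) / (2 * L)))))
      = if k = j then 2 * L / (N : ℝ) else 0 :=
  little_sinc_continuum_orthogonality_general N hNeven L hL k j hk₁ hk₂ hj₁ hj₂
end

section
/- For α > −1 define E₀^{(1)}(α) = (n₁(α) + n₂(α) log²(1+α)) / (d₁(α) + d₂(α) log(1+α) + d₃(α) log²(1+α)), where n₁(α) = 108α⁴, n₂(α) = 108α²(1+α), d₁(α) = 8α²(α² + 3α + 3), d₂(α) = −30α(α² + 3α + 2), d₃(α) = 36(1+α)². Then lim_{α → −1⁺} E₀^{(1)}(α) = 27/2 and lim_{α → ∞} E₀^{(1)}(α) = 27/2. -/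
open Real Filter Set
open scoped Topology

/-! Near `α = -1` the logarithm enters the numerator and the denominator only through
`(1 + α) * log (1 + α) ^ k`, which tends to `0`, so they tend to `108` and `8`. As `α → ∞`,
after division by `α ^ 4` it enters only through `log (1 + α) ^ k / α → 0`, and the rescaled
numerator and denominator again tend to `108` and `8`. -/

theorem Real.tendsto_mul_log_pow_nhdsGT_zero (n : ℕ) :
    Tendsto (fun x : ℝ => x * log x ^ n) (𝓝[>] 0) (𝓝 0) := by
  have h := ((tendsto_pow_log_div_mul_add_atTop 1 0 n one_ne_zero).const_mul ((-1) ^ n)).comp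
    tendsto_inv_nhdsGT_zero
  rw [mul_zero] at h
  refine h.congr fun x => ?_
  simp only [Function.comp_apply, one_mul, add_zero]
  rw [← neg_neg (log x), ← log_inv, neg_pow, div_inv_eq_mul]
  ring

theorem Real.tendsto_log_one_add_pow_div_atTop (n : ℕ) :
    Tendsto (fun x : ℝ => log (1 + x) ^ n / x) atTop (𝓝 0) := by
  have h := (tendsto_pow_log_div_mul_add_atTop 1 (-1) n one_ne_zero).comp
    (tendsto_atTop_add_const_left atTop 1 tendsto_id)
  refine h.congr fun x => ?_
  simp only [Function.comp_apply, id, one_mul, add_neg_cancel_comm]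

theorem tendsto_one_add_nhdsGT_neg_one :
    Tendsto (fun α : ℝ => 1 + α) (𝓝[>] (-1)) (𝓝[>] 0) := by
  have h : Tendsto (fun α : ℝ => 1 + α) (𝓝[>] (-1)) (𝓝[>] (1 + -1)) :=
    tendsto_nhdsWithin_of_tendsto_nhds_of_eventually_within _
      ((continuous_const_add 1).tendsto _ |>.mono_left nhdsWithin_le_nhds)
      (by filter_upwards [self_mem_nhdsWithin] with α (hα : -1 < α); exact mem_Ioi.2 (by linarith))
  rwa [add_neg_cancel] at h

theorem tendsto_one_add_mul_log_pow_nhdsGT (n : ℕ) :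
    Tendsto (fun α : ℝ => (1 + α) * log (1 + α) ^ n) (𝓝[>] (-1)) (𝓝 0) :=
  (tendsto_mul_log_pow_nhdsGT_zero n).comp tendsto_one_add_nhdsGT_neg_one

noncomputable def borgNum (α : ℝ) : ℝ :=
  108 * α ^ 4 + 108 * α ^ 2 * (1 + α) * (log (1 + α)) ^ 2

noncomputable def borgDen (α : ℝ) : ℝ :=
  8 * α ^ 2 * (α ^ 2 + 3 * α + 3) - 30 * α * (α ^ 2 + 3 * α + 2) * log (1 + α) +
    36 * (1 + α) ^ 2 * (log (1 + α)) ^ 2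

theorem tendsto_borgNum_nhdsGT : Tendsto borgNum (𝓝[>] (-1)) (𝓝 108) := by
  have hα : Tendsto (fun α : ℝ => α) (𝓝[>] (-1)) (𝓝 (-1)) := nhdsWithin_le_nhds
  have h := ((hα.pow 4).const_mul 108).add
    (((hα.pow 2).const_mul 108).mul (tendsto_one_add_mul_log_pow_nhdsGT 2))
  convert h using 2 with α
  · simp only [borgNum]; ring
  · norm_num

theorem tendsto_borgDen_nhdsGT : Tendsto borgDen (𝓝[>] (-1)) (𝓝 8) := by
  have hα : Tendsto (fun α : ℝ => α) (𝓝[>] (-1)) (𝓝 (-1)) := nhdsWithin_le_nhds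
  have hu := tendsto_one_add_mul_log_pow_nhdsGT 1
  have h := ((((hα.pow 2).const_mul 8).mul ((hα.pow 2).add (hα.const_mul 3) |>.add_const 3)).sub
    (((hα.const_mul 30).mul (hα.add_const 2)).mul hu)).add ((hu.pow 2).const_mul 36)
  convert h using 2 with α
  · simp only [borgDen]; ring
  · norm_num

theorem tendsto_borgNum_div_pow_atTop : Tendsto (fun α => borgNum α / α ^ 4) atTop (𝓝 108) := by
  have hs := tendsto_inv_atTop_zero (𝕜 := ℝ)
  have h := tendsto_const_nhds (x := (108 : ℝ)) |>.add
    (((hs.const_add 1).const_mul 108).mul (tendsto_log_one_add_pow_div_atTop 2))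
  convert h.congr' ?_ using 2
  · norm_num
  filter_upwards [eventually_ne_atTop 0] with α hα
  simp only [borgNum]
  field_simp
  ring

theorem tendsto_borgDen_div_pow_atTop : Tendsto (fun α => borgDen α / α ^ 4) atTop (𝓝 8) := by
  have hs := tendsto_inv_atTop_zero (𝕜 := ℝ)
  have hr := tendsto_log_one_add_pow_div_atTop 1
  have h := (((((hs.const_mul 3).add ((hs.pow 2).const_mul 3)).const_add 1).const_mul 8).sub
    (((((hs.const_mul 3).add ((hs.pow 2).const_mul 2)).const_add 1).const_mul 30).mul hr)).add
    ((((hs.const_add 1).pow 2).const_mul 36).mul (hr.pow 2))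
  convert h.congr' ?_ using 2
  · norm_num
  filter_upwards [eventually_ne_atTop 0] with α hα
  simp only [borgDen]
  field_simp
  ring

/-- The Rayleigh quotient of the first iterate for the Borg string,
`E₀⁽¹⁾(α) = (n₁ + n₂ log²(1+α)) / (d₁ + d₂ log(1+α) + d₃ log²(1+α))` with
`n₁ = 108α⁴`, `n₂ = 108α²(1+α)`, `d₁ = 8α²(α²+3α+3)`, `d₂ = -30α(α²+3α+2)`,
`d₃ = 36(1+α)²`, tends to `27/2` both as `α → -1⁺` and as `α → ∞`. -/
theorem borg_rayleigh_quotient_limits :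
    Tendsto
      (fun α : ℝ =>
        (108 * α ^ 4 + 108 * α ^ 2 * (1 + α) * (Real.log (1 + α)) ^ 2) /
          (8 * α ^ 2 * (α ^ 2 + 3 * α + 3) -
            30 * α * (α ^ 2 + 3 * α + 2) * Real.log (1 + α) +
            36 * (1 + α) ^ 2 * (Real.log (1 + α)) ^ 2))
      (𝓝[>] (-1 : ℝ)) (𝓝 (27 / 2 : ℝ)) ∧
    Tendsto
      (fun α : ℝ =>
        (108 * α ^ 4 + 108 * α ^ 2 * (1 + α) * (Real.log (1 + α)) ^ 2) /
          (8 * α ^ 2 * (α ^ 2 + 3 * α + 3) -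
            30 * α * (α ^ 2 + 3 * α + 2) * Real.log (1 + α) +
            36 * (1 + α) ^ 2 * (Real.log (1 + α)) ^ 2))
      atTop (𝓝 (27 / 2 : ℝ)) := by
  have hlim : (27 / 2 : ℝ) = 108 / 8 := by norm_num
  rw [hlim]
  refine ⟨tendsto_borgNum_nhdsGT.div tendsto_borgDen_nhdsGT (by norm_num), ?_⟩
  refine (tendsto_borgNum_div_pow_atTop.div tendsto_borgDen_div_pow_atTop (by norm_num)).congr' ?_
  filter_upwards [eventually_ne_atTop 0] with α hα
  exact div_div_div_cancel_right₀ (pow_ne_zero 4 hα) _ _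
end

section
/- Let α ∈ ℝ with |α| ≤ 2, let L' ∈ (−1/2, 1/2), and consider the parabolic density ρ(x) = (1 + αx)² on [−1/2, 1/2] and the initial function η₀(x) = (x + 1/2)(L' − x). Define κ̃ = (1/(1/2 + L')) ∫_{−1/2}^{L'} ∫_{−1/2}^{y} √(ρ(z)) η₀(z) dz dy and η₁(x) = √(ρ(x)) ∫_{−1/2}^{x} [κ̃ − ∫_{−1/2}^{y} √(ρ(z)) η₀(z) dz] dy. Then the shooting condition η₁(1/2) = 0 holds if and only if (α + 2)(2L' − 1)(α(4L'(L'+1)(4L'+1) − 5) + 10(4L'(L'+2) − 1)) = 0. -/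
/-!
On `[-1/2, 1/2]` the hypothesis `|α| ≤ 2` makes `√ρ = 1 + αx`, so every integral in the
iteration is an integral of a polynomial. With `F(y) = ∫_{-1/2}^{y} (1 + αz) η₀(z) dz` one gets
`η₁(1/2) = (1 + α/2) (κ̃ - ∫_{-1/2}^{1/2} F)`, and `κ̃` is the mean of `F` over `[-1/2, L']`,
which is a polynomial in `L'` because `F(-1/2) = 0`. Expanding, `1920 η₁(1/2)` is the
factored polynomial of the statement.
-/

open Real Set intervalIntegral

namespace ParabolicString

noncomputable def antideriv (α L' y : ℝ) : ℝ :=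
  -α / 4 * y ^ 4 + (α * L' / 3 - α / 6 - 1 / 3) * y ^ 3 + (L' / 2 + α * L' / 4 - 1 / 4) * y ^ 2
    + L' / 2 * y

noncomputable def antideriv₂ (α L' y : ℝ) : ℝ :=
  -α / 20 * y ^ 5 + (α * L' / 3 - α / 6 - 1 / 3) / 4 * y ^ 4
    + (L' / 2 + α * L' / 4 - 1 / 4) / 3 * y ^ 3 + L' / 4 * y ^ 2

variable (α L' : ℝ)

theorem hasDerivAt_antideriv (t : ℝ) :
    HasDerivAt (antideriv α L') ((1 + α * t) * ((t + 1 / 2) * (L' - t))) t := by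
  have h : HasDerivAt (antideriv α L') _ t := ((((hasDerivAt_pow 4 t).const_mul (-α / 4)).add
    ((hasDerivAt_pow 3 t).const_mul (α * L' / 3 - α / 6 - 1 / 3))).add
    ((hasDerivAt_pow 2 t).const_mul (L' / 2 + α * L' / 4 - 1 / 4))).add
    ((hasDerivAt_id t).const_mul (L' / 2))
  refine h.congr_deriv ?_
  ring

theorem hasDerivAt_antideriv₂ (t : ℝ) : HasDerivAt (antideriv₂ α L') (antideriv α L' t) t := by
  have h : HasDerivAt (antideriv₂ α L') _ t := (((hasDerivAt_pow 5 t).const_mul (-α / 20)).add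
    ((hasDerivAt_pow 4 t).const_mul ((α * L' / 3 - α / 6 - 1 / 3) / 4))).add
    ((hasDerivAt_pow 3 t).const_mul ((L' / 2 + α * L' / 4 - 1 / 4) / 3)) |>.add
    ((hasDerivAt_pow 2 t).const_mul (L' / 4))
  refine h.congr_deriv ?_
  simp only [antideriv]
  ring

theorem continuous_antideriv : Continuous (antideriv α L') :=
  continuous_iff_continuousAt.2 fun t => (hasDerivAt_antideriv α L' t).continuousAt

theorem integral_antideriv_sub (a b : ℝ) :
    ∫ y in a..b, (antideriv α L' y - antideriv α L' a) =
      antideriv₂ α L' b - antideriv₂ α L' a - (b - a) * antideriv α L' a := by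
  rw [integral_sub ((continuous_antideriv α L').intervalIntegrable a b) intervalIntegrable_const,
    integral_eq_sub_of_hasDerivAt (fun t _ => hasDerivAt_antideriv₂ α L' t)
      ((continuous_antideriv α L').intervalIntegrable a b),
    integral_const, smul_eq_mul]

theorem integral_const_sub_antideriv_sub (c a b : ℝ) :
    ∫ y in a..b, (c - (antideriv α L' y - antideriv α L' a)) =
      c * (b - a) - (antideriv₂ α L' b - antideriv₂ α L' a - (b - a) * antideriv α L' a) := by
  rw [integral_sub (f := fun _ => c) intervalIntegrable_const
      (g := fun y => antideriv α L' y - antideriv α L' a)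
      (((continuous_antideriv α L').sub continuous_const).intervalIntegrable a b),
    integral_antideriv_sub, integral_const, smul_eq_mul, mul_comm]

variable {α}

theorem sqrt_density_eq (hα : |α| ≤ 2) {x : ℝ} (hx : x ∈ Icc (-(1 : ℝ) / 2) (1 / 2)) :
    √((1 + α * x) ^ 2) = 1 + α * x := by
  obtain ⟨hα₁, hα₂⟩ := abs_le.1 hα
  obtain ⟨hx₁, hx₂⟩ := hx
  exact sqrt_sq (by nlinarith)

theorem integral_sqrt_density_mul (hα : |α| ≤ 2) {b : ℝ}
    (hb : b ∈ Icc (-(1 : ℝ) / 2) (1 / 2)) :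
    ∫ z in (-(1 : ℝ) / 2)..b, √((1 + α * z) ^ 2) * ((z + 1 / 2) * (L' - z)) =
      antideriv α L' b - antideriv α L' (-(1 : ℝ) / 2) := by
  have hsub : uIcc (-(1 : ℝ) / 2) b ⊆ Icc (-(1 : ℝ) / 2) (1 / 2) := by
    rw [uIcc_of_le hb.1]
    exact Icc_subset_Icc_right hb.2
  rw [integral_congr (g := fun z => (1 + α * z) * ((z + 1 / 2) * (L' - z)))
    fun z hz => by simp only [sqrt_density_eq hα (hsub hz)]]
  exact integral_eq_sub_of_hasDerivAt (fun t _ => hasDerivAt_antideriv α L' t)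
    (Continuous.intervalIntegrable (by fun_prop) _ _)

end ParabolicString

open ParabolicString in
/-- Shooting condition for the parabolic string `ρ(x) = (1+αx)²` on `[-1/2, 1/2]`:
with `η₀(x) = (x+1/2)(L'-x)` and one step of the modified iteration,
`η₁(x) = √(ρ x) ∫_{-1/2}^{x} (κ̃ - ∫_{-1/2}^{y} √(ρ z) η₀ z dz) dy` where
`κ̃ = (1/(1/2+L')) ∫_{-1/2}^{L'} ∫_{-1/2}^{y} √(ρ z) η₀ z dz dy`, the condition
`η₁(1/2) = 0` holds iff
`(α+2)(2L'-1)(α(4L'(L'+1)(4L'+1)-5) + 10(4L'(L'+2)-1)) = 0`. -/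
theorem parabolic_string_shooting_condition
    (α : ℝ) (hα : |α| ≤ 2) (L' : ℝ) (hL' : L' ∈ Set.Ioo (-(1 : ℝ) / 2) (1 / 2)) :
    let ρ : ℝ → ℝ := fun x => (1 + α * x) ^ 2
    let η₀ : ℝ → ℝ := fun x => (x + 1 / 2) * (L' - x)
    let κ : ℝ := (1 / (1 / 2 + L')) *
      ∫ y in (-(1 : ℝ) / 2)..L', ∫ z in (-(1 : ℝ) / 2)..y, Real.sqrt (ρ z) * η₀ z
    let η₁ : ℝ → ℝ := fun x => Real.sqrt (ρ x) *
      ∫ y in (-(1 : ℝ) / 2)..x, (κ - ∫ z in (-(1 : ℝ) / 2)..y, Real.sqrt (ρ z) * η₀ z)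
    (η₁ (1 / 2) = 0 ↔
      (α + 2) * (2 * L' - 1) *
        (α * (4 * L' * (L' + 1) * (4 * L' + 1) - 5) + 10 * (4 * L' * (L' + 2) - 1))
        = 0) := by
  intro ρ η₀ κ η₁
  obtain ⟨hL₁, hL₂⟩ := hL'
  have hright : (1 / 2 : ℝ) ∈ Icc (-(1 : ℝ) / 2) (1 / 2) := by norm_num
  have hleft : (-(1 : ℝ) / 2) ∈ Icc (-(1 : ℝ) / 2) (1 / 2) := by norm_num
  have hinner : EqOn (fun y => ∫ z in (-(1 : ℝ) / 2)..y, √(ρ z) * η₀ z)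
      (fun y => antideriv α L' y - antideriv α L' (-(1 : ℝ) / 2)) (Icc (-(1 : ℝ) / 2) (1 / 2)) :=
    fun y hy => integral_sqrt_density_mul L' hα hy
  have hκ : κ = L' ^ 3 / 12 + L' ^ 2 / 8 + L' / 16 + 1 / 96
      + α * (L' ^ 4 / 30 + L' ^ 3 / 40 - L' ^ 2 / 80 - 7 * L' / 480 - 1 / 320) := by
    have hsub : uIcc (-(1 : ℝ) / 2) L' ⊆ Icc (-(1 : ℝ) / 2) (1 / 2) := by
      rw [uIcc_of_le hL₁.le]
      exact Icc_subset_Icc_right hL₂.le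
    simp only [κ]
    rw [integral_congr (hinner.mono hsub), integral_antideriv_sub,
      one_div_mul_eq_div, div_eq_iff (by linarith)]
    simp only [antideriv, antideriv₂]
    ring
  have hη₁ : η₁ (1 / 2) = (α + 2) * (2 * L' - 1) *
      (α * (4 * L' * (L' + 1) * (4 * L' + 1) - 5) + 10 * (4 * L' * (L' + 2) - 1)) / 1920 := by
    simp only [η₁, ρ]
    rw [sqrt_density_eq hα hright,
      integral_congr (g := fun y => κ - (antideriv α L' y - antideriv α L' (-(1 : ℝ) / 2)))
        fun y hy => congrArg (κ - ·) (hinner (uIcc_subset_Icc hleft hright hy)),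
      integral_const_sub_antideriv_sub, hκ]
    simp only [antideriv, antideriv₂]
    ring
  rw [hη₁, div_eq_zero_iff]
  norm_num
end
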